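/- Let A be a random variable on a finite set 𝒜 and V a random variable on a finite set 𝒱, and let d be the Hamming (Kronecker delta) distortion on 𝒜. For any function Â : 𝒱 → 𝒜, if H(A|V) = h₂(α) for some α ∈ [0,1/2] with |𝒜| = 2, then P(Â(V) ≠ A) ≥ α. -/

import Mathlib

open Finset

/-- The binary entropy function (in bits), with the convention `0 log 0 = 0`. -/
noncomputable def binEnt (x : ℝ) : ℝ :=
  -x * Real.logb 2 x - (1 - x) * Real.logb 2 (1 - x)

/-- Shannon entropy (in bits) of a finitely supported distribution. -/
noncomputable def entD {α : Type*} [Fintype α] (q : α → ℝ) : ℝ :=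
  -∑ x, q x * Real.logb 2 (q x)

/-- Probability that a random variable `X` on a finite weighted space `(Ω, μ)` equals `x`. -/
noncomputable def pr {Ω α : Type*} [Fintype Ω] [DecidableEq α] (μ : Ω → ℝ) (X : Ω → α)
    (x : α) : ℝ :=
  ∑ ω ∈ Finset.univ.filter (fun ω => X ω = x), μ ω

/-- Entropy of a random variable. -/
noncomputable def entRV {Ω α : Type*} [Fintype Ω] [Fintype α] [DecidableEq α] (μ : Ω → ℝ)
    (X : Ω → α) : ℝ :=
  entD (pr μ X)

/-- Conditional entropy `H(X|Y)`. -/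
noncomputable def condEnt {Ω α β : Type*} [Fintype Ω] [Fintype α] [Fintype β]
    [DecidableEq α] [DecidableEq β] (μ : Ω → ℝ) (X : Ω → α) (Y : Ω → β) : ℝ :=
  entRV μ (fun ω => (X ω, Y ω)) - entRV μ Y

/-!
The error indicator `E = Â(V) xor A` arises from `A` by a bijection that depends only on `V`,
so `H(E|V) = H(A|V) = h₂(α)`. For binary `E`, `H(E|V) = ∑ᵥ P(V = v) h₂(P(E = 1 | V = v))`, and
concavity of `h₂` bounds this by `h₂(P(E = 1)) = h₂(P(Â(V) ≠ A))`. Since `h₂` is increasing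
on `[0, 1/2]`, this forces `α ≤ P(Â(V) ≠ A)`.
-/

section Distribution

variable {Ω α β : Type*} [Fintype Ω] (μ : Ω → ℝ)

lemma pr_nonneg [DecidableEq α] (hμ0 : ∀ ω, 0 ≤ μ ω) (X : Ω → α) (x : α) : 0 ≤ pr μ X x :=
  Finset.sum_nonneg fun ω _ => hμ0 ω

lemma sum_pr [Fintype α] [DecidableEq α] (X : Ω → α) : ∑ x, pr μ X x = ∑ ω, μ ω :=
  Finset.sum_fiberwise _ X μ

lemma pr_comp_equiv {α' : Type*} [DecidableEq α] [DecidableEq α'] (e : α ≃ α') (X : Ω → α)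
    (x : α') : pr μ (fun ω => e (X ω)) x = pr μ X (e.symm x) := by
  simp only [pr, ← e.eq_symm_apply]

lemma sum_pr_prod_left [Fintype α] [DecidableEq α] [DecidableEq β] (X : Ω → α) (Y : Ω → β)
    (y : β) : ∑ x, pr μ (fun ω => (X ω, Y ω)) (x, y) = pr μ Y y := by
  simp only [pr, Prod.mk.injEq, and_comm (a := X _ = _), ← Finset.filter_filter]
  exact Finset.sum_fiberwise _ X μ

lemma sum_pr_prod_right [DecidableEq α] [Fintype β] [DecidableEq β] (X : Ω → α) (Y : Ω → β)
    (x : α) : ∑ y, pr μ (fun ω => (X ω, Y ω)) (x, y) = pr μ X x := by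
  simp only [pr, Prod.mk.injEq, ← Finset.filter_filter]
  exact Finset.sum_fiberwise _ Y μ

lemma entRV_comp_equiv {α' : Type*} [Fintype α] [DecidableEq α] [Fintype α'] [DecidableEq α']
    (e : α ≃ α') (X : Ω → α) : entRV μ (fun ω => e (X ω)) = entRV μ X := by
  simp only [entRV, entD, pr_comp_equiv]
  rw [Equiv.sum_comp e.symm (fun x => pr μ X x * Real.logb 2 (pr μ X x))]

lemma condEnt_fiberwise_equiv [Fintype α] [DecidableEq α] [Fintype β] [DecidableEq β]
    (e : β → α ≃ α) (X : Ω → α) (Y : Ω → β) :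
    condEnt μ (fun ω => e (Y ω) (X ω)) Y = condEnt μ X Y := by
  simp only [condEnt]
  rw [← entRV_comp_equiv μ (Equiv.prodCongrLeft e) (fun ω => (X ω, Y ω))]
  rfl

end Distribution

lemma binEnt_eq_binEntropy_div (x : ℝ) : binEnt x = Real.binEntropy x / Real.log 2 := by
  simp only [binEnt, Real.binEntropy, Real.logb, Real.log_inv]
  ring

lemma concaveOn_binEnt : ConcaveOn ℝ (Set.Icc 0 1) binEnt := by
  have h := Real.strictConcave_binEntropy.concaveOn.smul (c := (Real.log 2)⁻¹) (by positivity)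
  have hfun : binEnt = fun x => (Real.log 2)⁻¹ • Real.binEntropy x := funext fun x => by
    rw [binEnt_eq_binEntropy_div, smul_eq_mul, div_eq_inv_mul]
  exact hfun ▸ h

lemma binEnt_strictMonoOn : StrictMonoOn binEnt (Set.Icc 0 (1 / 2)) := by
  intro x hx y hy hxy
  rw [binEnt_eq_binEntropy_div, binEnt_eq_binEntropy_div]
  have hhalf : (1 / 2 : ℝ) = 2⁻¹ := one_div 2
  rw [hhalf] at hx hy
  exact div_lt_div_of_pos_right (Real.binEntropy_strictMonoOn hx hy hxy) (Real.log_pos one_lt_two)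

lemma le_of_binEnt_le {x p : ℝ} (hx : x ∈ Set.Icc (0 : ℝ) (1 / 2)) (hp : 0 ≤ p)
    (h : binEnt x ≤ binEnt p) : x ≤ p := by
  rcases le_or_gt p (1 / 2) with hp2 | hp2
  · exact (binEnt_strictMonoOn.le_iff_le hx ⟨hp, hp2⟩).mp h
  · linarith [hx.2]

/-- The contribution of one fiber `Y = y` to `H(X,Y) - H(Y)` when `X` is binary. -/
lemma mul_logb_sub_eq_mul_binEnt {q r : ℝ} (hr0 : 0 ≤ r) (hrq : r ≤ q) :
    q * Real.logb 2 q - (r * Real.logb 2 r + (q - r) * Real.logb 2 (q - r))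
      = q * binEnt (r / q) := by
  rcases hr0.eq_or_lt with rfl | hr
  · simp [binEnt]
  rcases hrq.eq_or_lt with rfl | hrq'
  · simp [binEnt, div_self hr.ne']
  have hq : q ≠ 0 := by linarith
  have hqr : q - r ≠ 0 := by linarith
  have h1 : (1 : ℝ) - r / q = (q - r) / q := by field_simp
  rw [binEnt, h1, Real.logb_div hr.ne' hq, Real.logb_div hqr hq]
  field_simp
  ring

lemma sum_mul_binEnt_div_le {ι : Type*} [Fintype ι] {q r : ι → ℝ}
    (hr0 : ∀ i, 0 ≤ r i) (hrq : ∀ i, r i ≤ q i) (hq1 : ∑ i, q i = 1) :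
    ∑ i, q i * binEnt (r i / q i) ≤ binEnt (∑ i, r i) := by
  have hq0 : ∀ i, 0 ≤ q i := fun i => (hr0 i).trans (hrq i)
  have hmem : ∀ i ∈ Finset.univ, r i / q i ∈ Set.Icc (0 : ℝ) 1 := fun i _ =>
    ⟨div_nonneg (hr0 i) (hq0 i), div_le_one_of_le₀ (hrq i) (hq0 i)⟩
  have hweighted : ∀ i, q i • (r i / q i) = r i := by
    intro i
    rcases (hq0 i).eq_or_lt with h | h
    · rw [← h, le_antisymm (h ▸ hrq i) (hr0 i), zero_smul]
    · exact mul_div_cancel₀ _ h.ne'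
  simpa only [hweighted, smul_eq_mul] using
    concaveOn_binEnt.le_map_sum (fun i _ => hq0 i) hq1 hmem

section BinaryConditionalEntropy

variable {Ω β : Type*} [Fintype Ω] [Fintype β] [DecidableEq β] {μ : Ω → ℝ}

lemma condEnt_bool_eq_sum (hμ0 : ∀ ω, 0 ≤ μ ω) (X : Ω → Bool) (Y : Ω → β) :
    condEnt μ X Y = ∑ y, pr μ Y y
      * binEnt (pr μ (fun ω => (X ω, Y ω)) (true, y) / pr μ Y y) := by
  have hsplit : ∀ y, pr μ (fun ω => (X ω, Y ω)) (false, y)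
      = pr μ Y y - pr μ (fun ω => (X ω, Y ω)) (true, y) := by
    intro y
    rw [← sum_pr_prod_left μ X Y y, Fintype.sum_bool]
    ring
  have hle : ∀ y, pr μ (fun ω => (X ω, Y ω)) (true, y) ≤ pr μ Y y := by
    intro y
    linarith [hsplit y, pr_nonneg μ hμ0 (fun ω => (X ω, Y ω)) (false, y)]
  simp only [← mul_logb_sub_eq_mul_binEnt (pr_nonneg μ hμ0 _ _) (hle _), ← hsplit,
    Finset.sum_sub_distrib, condEnt, entRV, entD, Fintype.sum_prod_type, Fintype.sum_bool,
    Finset.sum_add_distrib]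
  ring

lemma condEnt_bool_le_binEnt (hμ0 : ∀ ω, 0 ≤ μ ω) (hμ1 : ∑ ω, μ ω = 1) (X : Ω → Bool)
    (Y : Ω → β) : condEnt μ X Y ≤ binEnt (pr μ X true) := by
  rw [condEnt_bool_eq_sum hμ0, ← sum_pr_prod_right μ X Y true]
  refine sum_mul_binEnt_div_le (fun y => pr_nonneg μ hμ0 _ _) (fun y => ?_)
    ((sum_pr μ Y).trans hμ1)
  rw [← sum_pr_prod_left μ X Y y, Fintype.sum_bool]
  linarith [pr_nonneg μ hμ0 (fun ω => (X ω, Y ω)) (false, y)]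

end BinaryConditionalEntropy

/-- Fano-type bound for a binary source: if `H(A|V) = h₂(α)` with `α ∈ [0,1/2]`, then
any estimator `Â(V)` of `A` has error probability at least `α`. -/
theorem fano_binary_error_bound
    {Ω 𝒱 : Type*} [Fintype Ω] [Fintype 𝒱] [DecidableEq 𝒱]
    (μ : Ω → ℝ) (hμ0 : ∀ ω, 0 ≤ μ ω) (hμ1 : ∑ ω, μ ω = 1)
    (A : Ω → Bool) (V : Ω → 𝒱) (Ahat : 𝒱 → Bool)
    (α : ℝ) (hα : α ∈ Set.Icc (0:ℝ) (1/2))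
    (hH : condEnt μ A V = binEnt α) :
    α ≤ ∑ ω ∈ Finset.univ.filter (fun ω => Ahat (V ω) ≠ A ω), μ ω := by
  set E : Ω → Bool := fun ω => xor (Ahat (V ω)) (A ω)
  have hE : condEnt μ E V = condEnt μ A V :=
    condEnt_fiberwise_equiv μ
      (fun v => Function.Involutive.toPerm _ (Bool.bne_self_left (Ahat v))) A V
  have herr : pr μ E true = ∑ ω ∈ Finset.univ.filter (fun ω => Ahat (V ω) ≠ A ω), μ ω := by
    simp only [pr, E, Bool.xor_iff_ne]
  rw [← herr]
  refine le_of_binEnt_le hα (pr_nonneg μ hμ0 E true) ?_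
  rw [← hH, ← hE]
  exact condEnt_bool_le_binEnt hμ0 hμ1 E V
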